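/- arXiv:1401.5745 — 3 statements merged into one kernel-verified Lean document; each statement's English description precedes it below -/
import Mathlib

section
/- For every τ with 0 < τ ≤ Kπ and every positive integer K, the partial cosine sum satisfies |(1/K)·∑_{n=1}^{K} cos((n/K)·τ)| ≤ π/τ. -/
open Real Finset

/-!
Multiplying the sum by `2 sin (θ/2)`, with `θ = τ / K`, makes it telescope to
`sin ((K + 1/2) θ) - sin (θ/2)`, so it is at most `1 / sin (θ/2)` in absolute value.
Since `θ ≤ π`, Jordan's inequality gives `sin (θ/2) ≥ θ / π`, hence `K θ = τ` yields the bound.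
-/

theorem two_mul_sin_half_mul_sum_cos (K : ℕ) (θ : ℝ) :
    2 * sin (θ / 2) * ∑ n ∈ Icc 1 K, cos (n * θ) = sin ((K + 1 / 2) * θ) - sin (θ / 2) := by
  induction K with
  | zero => simp [div_eq_inv_mul]
  | succ K ih =>
    have hlow : θ / 2 - (K + 1 : ℕ) * θ = -((K + 1 / 2) * θ) := by push_cast; ring
    have hhigh : θ / 2 + (K + 1 : ℕ) * θ = ((K + 1 : ℕ) + 1 / 2) * θ := by push_cast; ring
    rw [sum_Icc_succ_top (by omega), mul_add, ih, two_mul_sin_mul_cos, hlow, hhigh, sin_neg]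
    ring

theorem sin_half_mul_abs_sum_cos_le (K : ℕ) (θ : ℝ) :
    sin (θ / 2) * |∑ n ∈ Icc 1 K, cos (n * θ)| ≤ 1 := by
  have h := two_mul_sin_half_mul_sum_cos K θ
  calc sin (θ / 2) * |∑ n ∈ Icc 1 K, cos (n * θ)|
      ≤ |sin (θ / 2)| * |∑ n ∈ Icc 1 K, cos (n * θ)| := by gcongr; exact le_abs_self _
    _ = |sin ((K + 1 / 2) * θ) - sin (θ / 2)| / 2 := by rw [← h, abs_mul, abs_mul, abs_two]; ring
    _ ≤ (|sin ((K + 1 / 2) * θ)| + |sin (θ / 2)|) / 2 := by gcongr; exact abs_sub _ _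
    _ ≤ 1 := by linarith [abs_sin_le_one ((K + 1 / 2) * θ), abs_sin_le_one (θ / 2)]

theorem div_pi_le_sin_half {θ : ℝ} (h0 : 0 ≤ θ) (hπ : θ ≤ π) : θ / π ≤ sin (θ / 2) := by
  calc θ / π = 2 / π * (θ / 2) := by ring
    _ ≤ sin (θ / 2) := mul_le_sin (by linarith) (by linarith)

theorem mul_abs_sum_cos_le_pi (K : ℕ) {θ : ℝ} (h0 : 0 ≤ θ) (hπ : θ ≤ π) :
    θ * |∑ n ∈ Icc 1 K, cos (n * θ)| ≤ π := by
  have hJ := div_pi_le_sin_half h0 hπ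
  calc θ * |∑ n ∈ Icc 1 K, cos (n * θ)|
      = π * (θ / π * |∑ n ∈ Icc 1 K, cos (n * θ)|) := by field_simp
    _ ≤ π * (sin (θ / 2) * |∑ n ∈ Icc 1 K, cos (n * θ)|) := by gcongr
    _ ≤ π * 1 := by gcongr; exact sin_half_mul_abs_sum_cos_le K θ
    _ = π := mul_one π

theorem cK_bound_general (K : ℕ) (τ : ℝ) (hτ : 0 < τ) (hτK : τ ≤ K * Real.pi) :
    |(1 / (K : ℝ)) * ∑ n ∈ Finset.Icc 1 K, Real.cos ((n / K : ℝ) * τ)| ≤ Real.pi / τ := by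
  have hK : (0 : ℝ) < K := pos_of_mul_pos_left (hτ.trans_le hτK) pi_pos.le
  have hθπ : τ / K ≤ π := by rwa [div_le_iff₀ hK, mul_comm]
  have hsum : ∑ n ∈ Icc 1 K, cos ((n / K : ℝ) * τ) = ∑ n ∈ Icc 1 K, cos (n * (τ / K)) :=
    sum_congr rfl fun n _ => by rw [div_mul_eq_mul_div, mul_div_assoc]
  rw [hsum, abs_mul, abs_of_pos (one_div_pos.mpr hK), le_div_iff₀ hτ]
  calc 1 / (K : ℝ) * |∑ n ∈ Icc 1 K, cos (n * (τ / K))| * τ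
      = τ / K * |∑ n ∈ Icc 1 K, cos (n * (τ / K))| := by ring
    _ ≤ π := mul_abs_sum_cos_le_pi K (div_pos hτ hK).le hθπ

theorem cK_bound (K : ℕ) (hK : 0 < K) (τ : ℝ) (hτ : 0 < τ) (hτK : τ ≤ K * Real.pi) :
    |(1 / (K : ℝ)) * ∑ n ∈ Finset.Icc 1 K, Real.cos ((n / K : ℝ) * τ)| ≤ Real.pi / τ :=
  cK_bound_general K τ hτ hτK
end

section
/- For every τ with 0 < τ ≤ Kπ and every positive integer K, the derivative of c_K satisfies |c_K'(τ)| = |(1/K)·∑_{n=1}^{K} (n/K)·sin((n/K)·τ)| ≤ π/τ + π²/(2τ²). -/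
/-!
Put `θ = τ / K ∈ (0, π]`, so that `c_K'(τ) = -K⁻² ∑_{n ≤ K} n sin (n θ)`. Since
`4 sin² (θ/2) = 2 - 2 cos θ` and `sin ((k+1) θ) + sin ((k-1) θ) = 2 sin (k θ) cos θ`, induction on `K`
gives the closed form `4 sin² (θ/2) ∑_{n ≤ K} n sin (n θ) = (K + 1) sin (K θ) - K sin ((K + 1) θ)`,
whose right-hand side is at most `2 K sin (θ/2) + 1` in absolute value. Jordan's inequality
`sin (θ/2) ≥ θ / π` then turns `x = K sin (θ/2) ≥ τ / π` into the bound
`(2 x + 1) / (4 x²) ≤ π / (2 τ) + π² / (4 τ²)`.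
-/

open Real Finset

theorem four_mul_sin_half_sq_mul_sum_mul_sin (K : ℕ) (θ : ℝ) :
    4 * sin (θ / 2) ^ 2 * ∑ n ∈ Icc 1 K, (n : ℝ) * sin (n * θ)
      = (K + 1) * sin (K * θ) - K * sin ((K + 1) * θ) := by
  induction K with
  | zero => simp
  | succ K ih =>
    rw [sum_Icc_succ_top (by omega), mul_add, ih]
    have h_half : 4 * sin (θ / 2) ^ 2 = 2 - 2 * cos θ := by
      rw [sin_sq_eq_half_sub, mul_div_cancel₀ θ two_ne_zero]; ring
    have h_sum : sin ((K + 1) * θ + θ) + sin ((K + 1) * θ - θ) = 2 * sin ((K + 1) * θ) * cos θ := by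
      rw [sin_add, sin_sub]; ring
    rw [show ((K : ℝ) + 1) * θ - θ = K * θ by ring,
      show ((K : ℝ) + 1) * θ + θ = (K + 1 + 1) * θ by ring] at h_sum
    push_cast
    linear_combination ((K : ℝ) + 1) * h_sum + ((K : ℝ) + 1) * sin ((K + 1) * θ) * h_half

theorem abs_sin_sub_sin_le_two_mul_abs_sin_half (a b : ℝ) :
    |sin a - sin b| ≤ 2 * |sin ((a - b) / 2)| := by
  rw [sin_sub_sin, abs_mul, abs_mul, abs_two]
  exact mul_le_of_le_one_right (by positivity) (abs_cos_le_one _)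

theorem abs_add_one_mul_sin_sub_mul_sin_le {K : ℝ} (hK : 0 ≤ K) (θ : ℝ) :
    |(K + 1) * sin (K * θ) - K * sin ((K + 1) * θ)| ≤ 2 * K * |sin (θ / 2)| + 1 := by
  have h_diff : |sin (K * θ) - sin ((K + 1) * θ)| ≤ 2 * |sin (θ / 2)| := by
    have := abs_sin_sub_sin_le_two_mul_abs_sin_half (K * θ) ((K + 1) * θ)
    rwa [show (K * θ - (K + 1) * θ) / 2 = -(θ / 2) by ring, sin_neg, abs_neg] at this
  calc |(K + 1) * sin (K * θ) - K * sin ((K + 1) * θ)|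
      = |K * (sin (K * θ) - sin ((K + 1) * θ)) + sin (K * θ)| := by ring_nf
    _ ≤ K * |sin (K * θ) - sin ((K + 1) * θ)| + |sin (K * θ)| := by
      grw [abs_add_le, abs_mul, abs_of_nonneg hK]
    _ ≤ K * (2 * |sin (θ / 2)|) + 1 := by
      gcongr
      exact abs_sin_le_one _
    _ = 2 * K * |sin (θ / 2)| + 1 := by ring

theorem abs_sum_mul_sin_le (K : ℕ) {θ : ℝ} (hθ : sin (θ / 2) ≠ 0) :
    |∑ n ∈ Icc 1 K, (n : ℝ) * sin (n * θ)| ≤ (2 * K * |sin (θ / 2)| + 1) / (4 * sin (θ / 2) ^ 2) := by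
  rw [le_div_iff₀ (by positivity), ← abs_of_pos (by positivity : 0 < 4 * sin (θ / 2) ^ 2),
    ← abs_mul, mul_comm, four_mul_sin_half_sq_mul_sum_mul_sin]
  exact abs_add_one_mul_sin_sub_mul_sin_le K.cast_nonneg θ

theorem two_mul_add_one_div_le {x u : ℝ} (hx : 0 < x) (hxu : 1 ≤ u * x) :
    (2 * x + 1) / (4 * x ^ 2) ≤ u + u ^ 2 / 2 := by
  have hy : x⁻¹ ≤ u := by
    rw [inv_le_iff_one_le_mul₀ hx]; linarith [mul_comm u x]
  have hy0 : 0 < x⁻¹ := inv_pos.mpr hx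
  calc (2 * x + 1) / (4 * x ^ 2) = x⁻¹ / 2 + x⁻¹ ^ 2 / 4 := by field_simp; ring
    _ ≤ u + u ^ 2 / 2 := by nlinarith

theorem inv_mul_sum_div_mul_sin_div_mul (K : ℕ) (τ : ℝ) :
    (1 / (K : ℝ)) * ∑ n ∈ Icc 1 K, (n / K : ℝ) * sin ((n / K : ℝ) * τ)
      = (∑ n ∈ Icc 1 K, (n : ℝ) * sin (n * (τ / K))) / K ^ 2 := by
  rw [sum_div, mul_sum]
  refine sum_congr rfl fun n _ => ?_
  rw [show (n / K : ℝ) * τ = n * (τ / K) by ring]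
  ring

theorem cK_deriv_bound (K : ℕ) (hK : 0 < K) (τ : ℝ) (hτ : 0 < τ) (hτK : τ ≤ K * Real.pi) :
    |(1 / (K : ℝ)) * ∑ n ∈ Finset.Icc 1 K, (n / K : ℝ) * Real.sin ((n / K : ℝ) * τ)|
      ≤ Real.pi / τ + Real.pi ^ 2 / (2 * τ ^ 2) := by
  have hK₀ : (0 : ℝ) < K := by exact_mod_cast hK
  set s := sin (τ / K / 2)
  have h_jordan : τ / K / π ≤ s := by
    have := mul_le_sin (x := τ / K / 2) (by positivity) (by
      rw [div_le_div_iff_of_pos_right two_pos, div_le_iff₀ hK₀]; linarith)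
    calc τ / K / π = 2 / π * (τ / K / 2) := by field_simp
      _ ≤ s := this
  have hs : 0 < s := (by positivity : 0 < τ / K / π).trans_le h_jordan
  have h_rescaled : 1 ≤ π / τ * (K * s) := by
    rw [div_div, div_le_iff₀ (by positivity)] at h_jordan
    rw [div_mul_eq_mul_div, le_div_iff₀ hτ]
    linarith
  rw [inv_mul_sum_div_mul_sin_div_mul, abs_div, abs_of_pos (by positivity : (0 : ℝ) < K ^ 2)]
  calc |∑ n ∈ Icc 1 K, (n : ℝ) * sin (n * (τ / K))| / K ^ 2
      ≤ (2 * K * |s| + 1) / (4 * s ^ 2) / K ^ 2 := by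
        gcongr; exact abs_sum_mul_sin_le K hs.ne'
    _ = (2 * (K * s) + 1) / (4 * (K * s) ^ 2) := by
        rw [abs_of_pos hs]; field_simp
    _ ≤ π / τ + (π / τ) ^ 2 / 2 := two_mul_add_one_div_le (by positivity) h_rescaled
    _ = π / τ + π ^ 2 / (2 * τ ^ 2) := by ring
end

section
/- Let φ be the standard Gaussian density and H_q the probabilists' Hermite polynomials. Then ∫_ℝ |x|·H_{2ℓ}(x)·φ(x)dx = √(2/π)·(−1)^{ℓ+1}·(2ℓ)!/(2^ℓ·ℓ!·(2ℓ−1)) for ℓ ≥ 1, and ∫_ℝ |x|·H_{2ℓ+1}(x)·φ(x)dx = 0 for all ℓ ≥ 0. -/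
open Real Polynomial MeasureTheory Filter Topology Set
open scoped Nat

/-- The standard Gaussian density. -/
noncomputable def gaussPDF (x : ℝ) : ℝ := (Real.sqrt (2 * Real.pi))⁻¹ * Real.exp (-x ^ 2 / 2)

namespace HermAbs

lemma aeval_hermite_neg (n : ℕ) (x : ℝ) :
    (aeval (-x) (hermite n) : ℝ) = (-1 : ℝ) ^ n * aeval x (hermite n) := by
  rw [aeval_eq_sum_range (x := -x), aeval_eq_sum_range (x := x), Finset.mul_sum]
  refine Finset.sum_congr rfl fun k _ => ?_
  rcases Nat.even_or_odd (n + k) with h | h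
  · have h1 : ((-1 : ℝ)) ^ (n + k) = 1 := h.neg_one_pow
    have hk' : (-1 : ℝ) ^ k = (-1 : ℝ) ^ n := by
      have h2 : ((-1 : ℝ) ^ n) * ((-1 : ℝ) ^ n) = 1 := by
        rw [← pow_add]; exact Even.neg_one_pow ⟨n, rfl⟩
      calc (-1 : ℝ) ^ k = ((-1 : ℝ) ^ n * (-1 : ℝ) ^ n) * (-1 : ℝ) ^ k := by rw [h2, one_mul]
        _ = (-1 : ℝ) ^ n * ((-1 : ℝ) ^ (n + k)) := by rw [pow_add]; ring
        _ = (-1 : ℝ) ^ n := by rw [h1, mul_one]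
    rw [neg_pow, hk', zsmul_eq_mul, zsmul_eq_mul]
    ring
  · rw [coeff_hermite_of_odd_add h]; simp

lemma aeval_hermite_abs_even (n : ℕ) (hn : Even n) (x : ℝ) :
    (aeval |x| (hermite n) : ℝ) = aeval x (hermite n) := by
  rcases le_or_gt 0 x with hx | hx
  · rw [abs_of_nonneg hx]
  · rw [abs_of_neg hx, aeval_hermite_neg, hn.neg_one_pow, one_mul]

lemma gaussPDF_abs (x : ℝ) : gaussPDF |x| = gaussPDF x := by
  simp [gaussPDF, sq_abs]

lemma hasDerivAt_hermite_gauss (k : ℕ) (x : ℝ) :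
    HasDerivAt (fun y : ℝ => (aeval y (hermite k) : ℝ) * Real.exp (-(y ^ 2 / 2)))
      (-((aeval x (hermite (k + 1)) : ℝ) * Real.exp (-(x ^ 2 / 2)))) x := by
  have h1 : HasDerivAt (fun y : ℝ => -(y ^ 2 / 2)) (-x) x := by
    have := ((hasDerivAt_pow 2 x).div_const 2).fun_neg
    simpa using this
  have hexp : HasDerivAt (fun y : ℝ => Real.exp (-(y ^ 2 / 2)))
      (Real.exp (-(x ^ 2 / 2)) * (-x)) x := h1.exp
  have hp := Polynomial.hasDerivAt_aeval (q := hermite k) x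
  have := hp.fun_mul hexp
  refine this.congr_deriv ?_
  rw [hermite_succ]
  simp only [map_sub, map_mul, aeval_X]
  ring

lemma tendsto_aeval_gauss (p : Polynomial ℤ) :
    Tendsto (fun x : ℝ => (aeval x p : ℝ) * Real.exp (-(x ^ 2 / 2))) atTop (𝓝 0) := by
  have main : Tendsto (fun x : ℝ => (aeval x p : ℝ) * Real.exp (-(x ^ 2 / 2)))
      (cocompact ℝ) (𝓝 0) := by
    induction p using Polynomial.induction_on' with
    | add p q hp hq =>
      simpa [map_add, add_mul] using hp.add hq
    | monomial n a =>
      rw [tendsto_zero_iff_norm_tendsto_zero]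
      have h := (tendsto_rpow_abs_mul_exp_neg_mul_sq_cocompact one_half_pos
        (n : ℝ)).const_mul (|(a : ℝ)|)
      rw [mul_zero] at h
      refine h.congr fun x => ?_
      rw [Real.rpow_natCast, show -(1/2 : ℝ) * x ^ 2 = -(x ^ 2 / 2) by ring]
      simp [aeval_monomial, abs_mul, abs_pow, Real.abs_exp, Real.norm_eq_abs, mul_assoc]
  exact main.mono_left (by rw [cocompact_eq_atBot_atTop]; exact le_sup_right)

lemma integrable_pow_gauss (n : ℕ) :
    Integrable (fun x : ℝ => x ^ n * Real.exp (-(x ^ 2 / 2))) := by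
  have h := integrable_rpow_mul_exp_neg_mul_sq (b := 1/2) one_half_pos (s := (n : ℝ))
    (lt_of_lt_of_le (by norm_num) (Nat.cast_nonneg n))
  have e : (fun x : ℝ => x ^ ((n : ℝ)) * Real.exp (-(1/2) * x ^ 2))
      = fun x : ℝ => x ^ n * Real.exp (-(x ^ 2 / 2)) := by
    funext x
    rw [Real.rpow_natCast, show -(1/2 : ℝ) * x ^ 2 = -(x ^ 2 / 2) by ring]
  rwa [e] at h

lemma integrable_aeval_gauss (p : Polynomial ℤ) :
    Integrable (fun x : ℝ => (aeval x p : ℝ) * Real.exp (-(x ^ 2 / 2))) := by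
  induction p using Polynomial.induction_on' with
  | add p q hp hq => simpa [map_add, add_mul] using hp.fun_add hq
  | monomial n a =>
    have := (integrable_pow_gauss n).const_mul ((a : ℝ))
    simpa [aeval_monomial, mul_assoc] using this

lemma integral_Ioi_mul_hermite (n : ℕ) :
    ∫ x in Ioi (0 : ℝ), x * (aeval x (hermite (n + 2)) : ℝ) * Real.exp (-(x ^ 2 / 2))
      = (aeval (0 : ℝ) (hermite n) : ℝ) := by
  set F : ℝ → ℝ := fun y =>
    -(y * ((aeval y (hermite (n + 1)) : ℝ) * Real.exp (-(y ^ 2 / 2)))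
      + (aeval y (hermite n) : ℝ) * Real.exp (-(y ^ 2 / 2))) with hF
  have hderiv : ∀ x : ℝ, HasDerivAt F
      (x * (aeval x (hermite (n + 2)) : ℝ) * Real.exp (-(x ^ 2 / 2))) x := by
    intro x
    have h1 := (hasDerivAt_id' (x := x)).fun_mul (hasDerivAt_hermite_gauss (n + 1) x)
    have h2 := hasDerivAt_hermite_gauss n x
    have := (h1.fun_add h2).fun_neg
    refine this.congr_deriv ?_
    ring
  have hint : IntegrableOn
      (fun x : ℝ => x * (aeval x (hermite (n + 2)) : ℝ) * Real.exp (-(x ^ 2 / 2)))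
      (Ioi (0 : ℝ)) := by
    have := integrable_aeval_gauss (X * hermite (n + 2))
    simp only [map_mul, aeval_X] at this
    exact this.integrableOn
  have htend : Tendsto F atTop (𝓝 0) := by
    have := tendsto_aeval_gauss (-(X * hermite (n + 1) + hermite n))
    refine this.congr fun x => ?_
    simp only [map_neg, map_add, map_mul, aeval_X]
    ring
  have key := integral_Ioi_of_hasDerivAt_of_tendsto (a := 0) (m := 0)
    ((hderiv 0).continuousAt.continuousWithinAt)
    (fun x _ => hderiv x) hint htend
  rw [key, hF]
  simp

lemma doubleFact_succ (m : ℕ) : (2 * m + 1)‼ = (2 * m + 1) * (2 * m - 1)‼ := by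
  cases m with
  | zero => simp
  | succ k =>
    have : 2 * (k + 1) + 1 = (2 * k + 1) + 2 := by ring
    rw [this, Nat.doubleFactorial_add_two]
    have h2 : 2 * (k + 1) - 1 = 2 * k + 1 := by omega
    rw [h2]

lemma factorial_eq (m : ℕ) :
    (2 * (m + 1)).factorial = 2 ^ (m + 1) * (m + 1).factorial * (2 * m + 1) * (2 * m - 1)‼ := by
  have h1 : 2 * (m + 1) = (2 * m + 1) + 1 := by ring
  rw [h1, Nat.factorial_eq_mul_doubleFactorial]
  have h2 : 2 * m + 1 + 1 = 2 * (m + 1) := by ring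
  rw [h2, Nat.doubleFactorial_two_mul, doubleFact_succ]
  ring

lemma sqrt_two_div_pi : Real.sqrt (2 / Real.pi) = 2 * (Real.sqrt (2 * Real.pi))⁻¹ := by
  have hπ := Real.pi_pos
  have h2 : Real.sqrt (2 * Real.pi) ≠ 0 := by positivity
  have h : Real.sqrt (2 / Real.pi) * Real.sqrt (2 * Real.pi) = 2 := by
    rw [← Real.sqrt_mul (by positivity)]
    rw [show (2 / Real.pi) * (2 * Real.pi) = 2 ^ 2 by field_simp]
    exact Real.sqrt_sq (by norm_num)
  rw [show 2 * (Real.sqrt (2 * Real.pi))⁻¹ = 2 / Real.sqrt (2 * Real.pi) by ring,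
    eq_div_iff h2]
  exact h

end HermAbs

open HermAbs

/-- Hermite coefficients of the absolute value function: the even coefficients
are `√(2/π)·(−1)^{ℓ+1}(2ℓ)!/(2^ℓ ℓ! (2ℓ−1))` and the odd ones vanish. -/
theorem hermite_coefficients_of_abs :
    (∀ l : ℕ, 1 ≤ l →
      ∫ x : ℝ, |x| * (Polynomial.aeval x (Polynomial.hermite (2 * l)) : ℝ) * gaussPDF x =
        Real.sqrt (2 / Real.pi) * (-1 : ℝ) ^ (l + 1) * (Nat.factorial (2 * l)) /
          (2 ^ l * Nat.factorial l * (2 * l - 1))) ∧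
    (∀ l : ℕ,
      ∫ x : ℝ, |x| * (Polynomial.aeval x (Polynomial.hermite (2 * l + 1)) : ℝ) * gaussPDF x = 0) := by
  constructor
  · intro l hl
    obtain ⟨m, rfl⟩ : ∃ m, l = m + 1 := ⟨l - 1, (Nat.succ_pred_eq_of_pos hl).symm⟩
    have heven : Even (2 * (m + 1)) := even_two_mul _
    have step1 : (∫ x : ℝ, |x| * (aeval x (hermite (2 * (m + 1))) : ℝ) * gaussPDF x)
        = ∫ x : ℝ, (fun t : ℝ => t * (aeval t (hermite (2 * (m + 1))) : ℝ) * gaussPDF t) |x| := by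
      congr 1
      funext x
      simp only
      rw [aeval_hermite_abs_even _ heven, gaussPDF_abs]
    rw [step1, integral_comp_abs (f := fun t : ℝ => t * (aeval t (hermite (2 * (m + 1))) : ℝ) * gaussPDF t)]
    have step2 : (∫ x in Ioi (0 : ℝ), x * (aeval x (hermite (2 * (m + 1))) : ℝ) * gaussPDF x)
        = (Real.sqrt (2 * Real.pi))⁻¹ *
          ∫ x in Ioi (0 : ℝ), x * (aeval x (hermite (2 * m + 2)) : ℝ) * Real.exp (-(x ^ 2 / 2)) := by
      rw [← integral_const_mul]
      congr 1
      funext x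
      rw [gaussPDF, show (2 * (m + 1)) = 2 * m + 2 by ring, neg_div]
      ring
    rw [step2, integral_Ioi_mul_hermite]
    have h0 : (aeval (0 : ℝ) (hermite (2 * m)) : ℝ)
        = ((-1 : ℝ) ^ m * ((2 * m - 1)‼ : ℕ)) := by
      have := coeff_hermite_explicit m 0
      rw [add_zero, Nat.choose_zero_right] at this
      have h0' : (aeval (0 : ℝ) (hermite (2 * m)) : ℝ)
          = ((hermite (2 * m)).coeff 0 : ℝ) := by
        rw [aeval_def, Polynomial.eval₂_at_zero]
        simp
      rw [h0', this]
      push_cast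
      ring
    rw [h0]
    have hfac := factorial_eq m
    have hπ := Real.pi_pos
    have h2l : ((2 * (m + 1)).factorial : ℝ)
        = 2 ^ (m + 1) * ((m + 1).factorial : ℝ) * (2 * m + 1) * ((2 * m - 1)‼ : ℕ) := by
      rw [hfac]; push_cast; ring
    rw [h2l, sqrt_two_div_pi]
    have hne1 : ((m + 1).factorial : ℝ) ≠ 0 := Nat.cast_ne_zero.2 (Nat.factorial_ne_zero _)
    have hne2 : (2 : ℝ) ^ (m + 1) ≠ 0 := by positivity
    have hne3 : (2 * (m : ℝ) + 1) ≠ 0 := by positivity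
    have hne4 : (2 * ((m : ℝ) + 1) - 1) ≠ 0 := by
      have : (0 : ℝ) ≤ m := Nat.cast_nonneg m
      nlinarith
    have hcast : (2 * ((m : ℕ) + 1 : ℕ) : ℝ) - 1 = 2 * (m : ℝ) + 1 := by push_cast; ring
    have hpow : ((-1 : ℝ)) ^ (m + 1 + 1) = (-1 : ℝ) ^ m := by
      rw [pow_succ, pow_succ]; ring
    push_cast
    rw [hpow]
    field_simp
    ring
  · intro l
    set G : ℝ → ℝ := fun x => |x| * (aeval x (hermite (2 * l + 1)) : ℝ) * gaussPDF x with hG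
    have hodd : ∀ x : ℝ, G (-x) = -G x := by
      intro x
      have hodd' : Odd (2 * l + 1) := ⟨l, rfl⟩
      simp only [hG, abs_neg, aeval_hermite_neg, hodd'.neg_one_pow, gaussPDF, neg_sq]
      ring
    have h1 : (∫ x : ℝ, G (-x)) = ∫ x : ℝ, G x := integral_neg_eq_self G volume
    have h2 : (∫ x : ℝ, G (-x)) = -∫ x : ℝ, G x := by
      rw [show (fun x : ℝ => G (-x)) = fun x : ℝ => -G x from funext hodd]
      exact integral_neg G
    have : (∫ x : ℝ, G x) = 0 := by linarith [h1.symm.trans h2]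
    exact this
end
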